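/- For every ε ∈ (0,1), every process on I_ε with Σ_{i ∈ I_ε} p_i^1 = 1, and every step t, one has W_{t+1} ≤ (1 + 1/B_ε³) · W_t + 2ε. -/

import Mathlib

/-- `B_ε := 2⌈log₂(1/ε)⌉ + 1`. -/
noncomputable def Bval (ε : ℝ) : ℤ := 2 * ⌈Real.logb 2 (1 / ε)⌉ + 1

/-- `I_ε`: the odd integers `i` with `-B_ε ≤ i ≤ B_ε`. -/
noncomputable def Iset (ε : ℝ) : Finset ℤ :=
  (Finset.Icc (-(Bval ε)) (Bval ε)).filter (fun i => Odd i)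

/-- `I_ε⁺ := I_ε ∩ {i > 0}`. -/
noncomputable def Ipos (ε : ℝ) : Finset ℤ := (Iset ε).filter (fun i => 0 < i)

/-- `I_ε⁻ := I_ε ∩ {i < 0}`. -/
noncomputable def Ineg (ε : ℝ) : Finset ℤ := (Iset ε).filter (fun i => i < 0)

/-- A process on `I_ε` (Definition 4 of the paper): at each step `t ≥ 1` and each `i ∈ I_ε`,
an amount `q t i` with `0 ≤ q t i ≤ p t i` of the weight `p t i` moves to position `i - 2`
and the remaining `p t i - q t i` moves to position `i + 2`, clamped to stay in `[-B_ε, B_ε]`;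
`p (t+1) i` is the total weight arriving at `i`.  Moreover:
(i) at every step at least `15/16` of the mass on `I_ε⁺` moves down, and
(ii) for every `i ∈ I_ε⁻` whose mass is at least `(1/B_ε⁴) Σ_{j ∈ I_ε⁺} p t j`,
at most `1/16` of the weight at `i` moves up. -/
structure MProcess (ε : ℝ) where
  p : ℕ → ℤ → ℝ
  q : ℕ → ℤ → ℝ
  q_nonneg : ∀ t i, 0 ≤ q t i
  q_le_p : ∀ t i, q t i ≤ p t i
  update : ∀ t, 1 ≤ t → ∀ i ∈ Iset ε,
    p (t + 1) i =
      (∑ j ∈ (Iset ε).filter (fun j => max (j - 2) (-(Bval ε)) = i), q t j) +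
      (∑ j ∈ (Iset ε).filter (fun j => min (j + 2) (Bval ε) = i), (p t j - q t j))
  mass_down : ∀ t, 1 ≤ t →
    (15 / 16 : ℝ) * ∑ i ∈ Ipos ε, p t i ≤ ∑ i ∈ Ipos ε, q t i
  up_small : ∀ t, 1 ≤ t → ∀ i ∈ Ineg ε,
    (1 / (Bval ε : ℝ) ^ 4) * (∑ j ∈ Ipos ε, p t j) ≤ p t i →
    p t i - q t i ≤ (1 / 16 : ℝ) * p t i

/-- `W_t := Σ_{i ∈ I_ε⁻} 2^i p_i^t + Σ_{i ∈ I_ε⁺} p_i^t`. -/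
noncomputable def Wfun (ε : ℝ) (P : MProcess ε) (t : ℕ) : ℝ :=
  (∑ i ∈ Ineg ε, (2 : ℝ) ^ i * P.p t i) + ∑ i ∈ Ipos ε, P.p t i

/-!
Put `φ i = 2 ^ i` for `i < 0` and `φ i = 1` for `i > 0`, so that `W_t = Σ_i φ(i) p_i^t`, and
`W_{t+1}` is the sum over sources `j` of the potential that the weight at `j` carries to its two
targets. A source in `I_ε⁺` never carries more than its mass. A source `-B_ε < j < 0` carries at
most `φ(j) p_j` when at most `1/16` of its weight moves up, since moving down divides `φ` by `4`
and moving up multiplies it by at most `4`; otherwise `p_j < S / B_ε⁴` with `S = Σ_{I_ε⁺} p`, and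
its excess `3 φ(j) p_j` is below `(3/2) S / B_ε⁴`. The `(B_ε + 1)/2` negative sources thus add at
most `S / B_ε³ ≤ W_t / B_ε³`. The source `-B_ε` has mass at most `1`, hence excess at most
`3 · 2^{-B_ε} ≤ 2ε`.
-/

open Finset

lemma Finset.sum_mul_sum_fiberwise {ι κ R : Type*} [DecidableEq κ] [NonUnitalNonAssocSemiring R]
    {s : Finset ι} {t : Finset κ} {f : ι → κ} (hf : ∀ j ∈ s, f j ∈ t) (φ : κ → R) (a : ι → R) :
    ∑ i ∈ t, φ i * ∑ j ∈ s with f j = i, a j = ∑ j ∈ s, φ (f j) * a j := by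
  rw [← sum_fiberwise_of_maps_to hf (fun j => φ (f j) * a j)]
  refine sum_congr rfl fun i _ => ?_
  rw [mul_sum]
  exact sum_congr rfl fun j hj => by rw [(mem_filter.mp hj).2]

section Bounds

variable {ε : ℝ}

lemma mem_Iset {i : ℤ} : i ∈ Iset ε ↔ -Bval ε ≤ i ∧ i ≤ Bval ε ∧ i % 2 = 1 := by
  simp [Iset, Int.odd_iff, and_assoc]

lemma Bval_emod_two (ε : ℝ) : Bval ε % 2 = 1 := by
  unfold Bval; omega

lemma max_sub_two_mem_Iset {j : ℤ} (hj : j ∈ Iset ε) : max (j - 2) (-Bval ε) ∈ Iset ε := by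
  have := Bval_emod_two ε
  rw [mem_Iset] at hj ⊢
  rcases max_cases (j - 2) (-Bval ε) with ⟨h, _⟩ | ⟨h, _⟩ <;> rw [h] <;> omega

lemma min_add_two_mem_Iset {j : ℤ} (hj : j ∈ Iset ε) : min (j + 2) (Bval ε) ∈ Iset ε := by
  have := Bval_emod_two ε
  rw [mem_Iset] at hj ⊢
  rcases min_cases (j + 2) (Bval ε) with ⟨h, _⟩ | ⟨h, _⟩ <;> rw [h] <;> omega

lemma neg_Bval_mem_Ineg (hB : 1 ≤ Bval ε) : -Bval ε ∈ Ineg ε := by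
  have := Bval_emod_two ε
  simp only [Ineg, mem_filter, mem_Iset]; omega

lemma sum_Iset_eq_sum_Ineg_add_sum_Ipos (f : ℤ → ℝ) :
    ∑ i ∈ Iset ε, f i = ∑ i ∈ Ineg ε, f i + ∑ i ∈ Ipos ε, f i := by
  rw [← sum_filter_add_sum_filter_not (Iset ε) (· < 0), Ineg, Ipos]
  congr 2
  refine filter_congr fun i hi => ?_
  have := (mem_Iset.mp hi).2.2
  omega

lemma two_mul_card_Ineg_le (hB : 1 ≤ Bval ε) : 2 * ((Ineg ε).card : ℤ) ≤ Bval ε + 1 := by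
  have hinj : (Ineg ε).card ≤ (Icc 1 ((Bval ε + 1) / 2)).card := by
    refine card_le_card_of_injOn (fun i => (1 - i) / 2) (fun i hi => ?_) (fun i hi i' hi' h => ?_)
    · simp only [mem_coe, Ineg, mem_filter, mem_Iset] at hi
      simp only [coe_Icc, Set.mem_Icc]; omega
    · simp only [mem_coe, Ineg, mem_filter, mem_Iset] at hi hi'
      simp only at h; omega
  have := Bval_emod_two ε
  rw [Int.card_Icc] at hinj
  omega

lemma card_Ineg_mul_le (hB : 3 ≤ Bval ε) {x : ℝ} (hx : 0 ≤ x) :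
    (Ineg ε).card * (3 / 2 * (x / Bval ε ^ 4)) ≤ x / Bval ε ^ 3 := by
  have hcard : (2 * (Ineg ε).card : ℝ) ≤ Bval ε + 1 := by
    exact_mod_cast two_mul_card_Ineg_le (by omega)
  have hBR : (3 : ℝ) ≤ Bval ε := by exact_mod_cast hB
  calc (Ineg ε).card * (3 / 2 * (x / Bval ε ^ 4))
      = 3 / 4 * (2 * (Ineg ε).card) * (x / Bval ε ^ 4) := by ring
    _ ≤ 3 / 4 * (Bval ε + 1) * (x / Bval ε ^ 4) := by gcongr
    _ ≤ Bval ε * (x / Bval ε ^ 4) := by gcongr; linarith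
    _ = x / Bval ε ^ 3 := by field_simp

lemma three_le_Bval (hε : ε ∈ Set.Ioo 0 1) : 3 ≤ Bval ε := by
  have hlog : 0 < Real.logb 2 (1 / ε) := Real.logb_pos one_lt_two (one_lt_one_div hε.1 hε.2)
  have := Int.ceil_pos.mpr hlog
  unfold Bval; omega

lemma two_zpow_neg_Bval_le (hε : ε ∈ Set.Ioo 0 1) : (2 : ℝ) ^ (-Bval ε) ≤ ε / 2 := by
  set b := ⌈Real.logb 2 (1 / ε)⌉
  have hb : 0 ≤ b := by have := three_le_Bval hε; unfold Bval at this; omega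
  have hinv : 1 / ε ≤ 2 ^ b := by
    calc 1 / ε = (2 : ℝ) ^ Real.logb 2 (1 / ε) :=
          (Real.rpow_logb two_pos (by norm_num) (by simpa using hε.1)).symm
      _ ≤ (2 : ℝ) ^ (b : ℝ) := Real.rpow_le_rpow_of_exponent_le one_le_two (Int.le_ceil _)
      _ = 2 ^ b := Real.rpow_intCast 2 b
  have hpow : (2 : ℝ) ^ (-b) ≤ ε := by
    rw [zpow_neg, ← one_div]
    exact (div_le_iff₀ (by positivity)).mpr (by rwa [div_le_iff₀ hε.1, mul_comm] at hinv)
  calc (2 : ℝ) ^ (-Bval ε) ≤ 2 ^ (-b - 1) := zpow_le_zpow_right₀ one_le_two (by unfold Bval; omega)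
    _ = 2 ^ (-b) / 2 := by rw [zpow_sub₀ two_ne_zero, zpow_one]
    _ ≤ ε / 2 := by gcongr

end Bounds

noncomputable def potential (i : ℤ) : ℝ := if i < 0 then 2 ^ i else 1

section Potential

variable {i j : ℤ}

lemma potential_of_neg (h : i < 0) : potential i = 2 ^ i := if_pos h

lemma potential_of_nonneg (h : 0 ≤ i) : potential i = 1 := if_neg (not_lt.mpr h)

lemma potential_nonneg (i : ℤ) : 0 ≤ potential i := by
  unfold potential; split <;> positivity

lemma potential_le_one (i : ℤ) : potential i ≤ 1 := by
  unfold potential; split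
  · exact zpow_le_one_of_nonpos₀ one_le_two (by omega)
  · rfl

lemma potential_mono : Monotone potential := by
  intro i j hij
  rcases lt_or_ge j 0 with hj | hj
  · rw [potential_of_neg hj, potential_of_neg (hij.trans_lt hj)]
    exact zpow_le_zpow_right₀ one_le_two hij
  · rw [potential_of_nonneg hj]
    exact potential_le_one i

lemma potential_le_half (h : i < 0) : potential i ≤ 1 / 2 := by
  calc potential i ≤ potential (-1) := potential_mono (by omega)
    _ = 1 / 2 := by rw [potential_of_neg (by norm_num)]; norm_num

lemma potential_sub_two (h : i < 0) : potential (i - 2) = potential i / 4 := by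
  rw [potential_of_neg h, potential_of_neg (by omega), zpow_sub₀ two_ne_zero]; norm_num

lemma potential_add_two_le (i : ℤ) : potential (i + 2) ≤ 4 * potential i := by
  rcases lt_or_ge (i + 2) 0 with h | h
  · rw [potential_of_neg h, potential_of_neg (by omega), zpow_add₀ two_ne_zero]
    norm_num [mul_comm]
  · have h' : -2 ≤ i := by omega
    calc potential (i + 2) ≤ 1 := potential_le_one _
      _ = 4 * potential (-2) := by rw [potential_of_neg (by norm_num)]; norm_num
      _ ≤ 4 * potential i := by gcongr; exact potential_mono h'

end Potential

namespace MProcess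

variable {ε : ℝ} (P : MProcess ε)

lemma p_nonneg (t : ℕ) (i : ℤ) : 0 ≤ P.p t i := (P.q_nonneg t i).trans (P.q_le_p t i)

lemma sum_mul_p_succ (φ : ℤ → ℝ) {t : ℕ} (ht : 1 ≤ t) :
    ∑ i ∈ Iset ε, φ i * P.p (t + 1) i =
      ∑ j ∈ Iset ε, (φ (max (j - 2) (-Bval ε)) * P.q t j +
        φ (min (j + 2) (Bval ε)) * (P.p t j - P.q t j)) := by
  rw [sum_congr rfl fun i hi => by rw [P.update t ht i hi, mul_add], sum_add_distrib,
    sum_mul_sum_fiberwise (fun _ => max_sub_two_mem_Iset),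
    sum_mul_sum_fiberwise (fun _ => min_add_two_mem_Iset), sum_add_distrib]

lemma sum_p_eq_one (h1 : ∑ i ∈ Iset ε, P.p 1 i = 1) {t : ℕ} (ht : 1 ≤ t) :
    ∑ i ∈ Iset ε, P.p t i = 1 := by
  induction t, ht using Nat.le_induction with
  | base => exact h1
  | succ t ht ih => simpa [add_sub_cancel, ih] using P.sum_mul_p_succ (fun _ => 1) ht

lemma p_le_one (h1 : ∑ i ∈ Iset ε, P.p 1 i = 1) {t : ℕ} (ht : 1 ≤ t) {i : ℤ}
    (hi : i ∈ Iset ε) : P.p t i ≤ 1 :=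
  P.sum_p_eq_one h1 ht ▸ single_le_sum (fun j _ => P.p_nonneg t j) hi

lemma Wfun_eq_sum_potential (t : ℕ) :
    Wfun ε P t = ∑ i ∈ Iset ε, potential i * P.p t i := by
  rw [sum_Iset_eq_sum_Ineg_add_sum_Ipos, Wfun]
  congr 1 <;> refine sum_congr rfl fun i hi => ?_
  · rw [potential_of_neg (mem_filter.mp hi).2]
  · rw [potential_of_nonneg (mem_filter.mp hi).2.le, one_mul]

lemma sum_Ipos_p_le_Wfun (t : ℕ) : ∑ i ∈ Ipos ε, P.p t i ≤ Wfun ε P t :=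
  le_add_of_nonneg_left <| sum_nonneg fun i _ => mul_nonneg (by positivity) (P.p_nonneg t i)

noncomputable def potentialAfter (t : ℕ) (j : ℤ) : ℝ :=
  potential (max (j - 2) (-Bval ε)) * P.q t j +
    potential (min (j + 2) (Bval ε)) * (P.p t j - P.q t j)

lemma Wfun_succ_eq_sum_potentialAfter {t : ℕ} (ht : 1 ≤ t) :
    Wfun ε P (t + 1) = ∑ j ∈ Iset ε, P.potentialAfter t j := by
  rw [Wfun_eq_sum_potential, P.sum_mul_p_succ potential ht]
  rfl

variable {P}
variable {t : ℕ} {j : ℤ}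

lemma potentialAfter_le_p : P.potentialAfter t j ≤ P.p t j := by
  have hq := P.q_nonneg t j
  have hpq := sub_nonneg.mpr (P.q_le_p t j)
  calc P.potentialAfter t j ≤ 1 * P.q t j + 1 * (P.p t j - P.q t j) := by
        unfold potentialAfter; gcongr <;> exact potential_le_one _
    _ = P.p t j := by ring

lemma potentialAfter_le_four_mul (hj : -Bval ε ≤ j) :
    P.potentialAfter t j ≤ 4 * potential j * P.p t j := by
  have hq := P.q_nonneg t j
  have hpq := sub_nonneg.mpr (P.q_le_p t j)
  have hφ := potential_nonneg j
  calc P.potentialAfter t j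
      ≤ 4 * potential j * P.q t j + 4 * potential j * (P.p t j - P.q t j) := by
        unfold potentialAfter
        gcongr
        · exact (potential_mono (max_le (by omega) hj)).trans (by linarith)
        · exact (potential_mono (min_le_left _ _)).trans (potential_add_two_le j)
    _ = 4 * potential j * P.p t j := by ring

lemma potentialAfter_le_of_up_small (hj : -Bval ε + 2 ≤ j) (hj0 : j < 0)
    (hup : P.p t j - P.q t j ≤ 1 / 16 * P.p t j) :
    P.potentialAfter t j ≤ potential j * P.p t j := by
  have hφ := potential_nonneg j
  have hp := P.p_nonneg t j
  calc P.potentialAfter t j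
      ≤ potential j / 4 * P.p t j + 4 * potential j * (1 / 16 * P.p t j) := by
        unfold potentialAfter
        rw [max_eq_left (by omega), potential_sub_two hj0]
        gcongr
        · exact P.q_le_p t j
        · exact sub_nonneg.mpr (P.q_le_p t j)
        · exact (potential_mono (min_le_left _ _)).trans (potential_add_two_le j)
    _ ≤ potential j * P.p t j := by nlinarith

lemma potentialAfter_neg_Bval_le (hε : ε ∈ Set.Ioo 0 1) (h1 : ∑ i ∈ Iset ε, P.p 1 i = 1)
    (ht : 1 ≤ t) :
    P.potentialAfter t (-Bval ε) ≤ potential (-Bval ε) * P.p t (-Bval ε) + 2 * ε := by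
  have hB := three_le_Bval hε
  have hφ : potential (-Bval ε) ≤ ε / 2 :=
    (potential_of_neg (by omega)).trans_le (two_zpow_neg_Bval_le hε)
  have hp1 := P.p_le_one h1 ht (mem_filter.mp (neg_Bval_mem_Ineg (by omega))).1
  have hp0 := P.p_nonneg t (-Bval ε)
  have hφ0 := potential_nonneg (-Bval ε)
  calc P.potentialAfter t (-Bval ε)
      ≤ 4 * potential (-Bval ε) * P.p t (-Bval ε) := potentialAfter_le_four_mul le_rfl
    _ = potential (-Bval ε) * P.p t (-Bval ε) + 3 * potential (-Bval ε) * P.p t (-Bval ε) := by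
        ring
    _ ≤ potential (-Bval ε) * P.p t (-Bval ε) + 3 * (ε / 2) * 1 := by gcongr; linarith [hε.1]
    _ ≤ potential (-Bval ε) * P.p t (-Bval ε) + 2 * ε := by linarith [hε.1]

lemma potentialAfter_le_of_neg_Bval_lt (ht : 1 ≤ t) (hj : j ∈ Ineg ε) (hjB : -Bval ε < j) :
    P.potentialAfter t j ≤
      potential j * P.p t j + 3 / 2 * ((∑ i ∈ Ipos ε, P.p t i) / Bval ε ^ 4) := by
  obtain ⟨hjI, hj0⟩ := mem_filter.mp hj
  have hj2 : -Bval ε + 2 ≤ j := by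
    have := Bval_emod_two ε
    have := mem_Iset.mp hjI
    omega
  have hS : 0 ≤ (∑ i ∈ Ipos ε, P.p t i) / Bval ε ^ 4 := by
    have := sum_nonneg fun i (_ : i ∈ Ipos ε) => P.p_nonneg t i
    positivity
  by_cases hbig : 1 / Bval ε ^ 4 * ∑ i ∈ Ipos ε, P.p t i ≤ P.p t j
  · linarith [potentialAfter_le_of_up_small hj2 hj0 (P.up_small t ht j hj hbig)]
  rw [one_div_mul_eq_div, not_le] at hbig
  have hp0 := P.p_nonneg t j
  calc P.potentialAfter t j ≤ 4 * potential j * P.p t j := potentialAfter_le_four_mul hjB.le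
    _ = potential j * P.p t j + 3 * potential j * P.p t j := by ring
    _ ≤ potential j * P.p t j + 3 * (1 / 2) * P.p t j := by gcongr; exact potential_le_half hj0
    _ ≤ potential j * P.p t j + 3 / 2 * ((∑ i ∈ Ipos ε, P.p t i) / Bval ε ^ 4) := by linarith

lemma sum_potentialAfter_Ineg_le (hε : ε ∈ Set.Ioo 0 1) (h1 : ∑ i ∈ Iset ε, P.p 1 i = 1)
    (ht : 1 ≤ t) :
    ∑ j ∈ Ineg ε, P.potentialAfter t j ≤ ∑ i ∈ Ineg ε, (2 : ℝ) ^ i * P.p t i + 2 * ε +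
      (Ineg ε).card * (3 / 2 * ((∑ i ∈ Ipos ε, P.p t i) / Bval ε ^ 4)) := by
  set c := 3 / 2 * ((∑ i ∈ Ipos ε, P.p t i) / Bval ε ^ 4)
  have hc : 0 ≤ c := by
    have := sum_nonneg fun i (_ : i ∈ Ipos ε) => P.p_nonneg t i
    positivity
  have hmem := neg_Bval_mem_Ineg (by linarith [three_le_Bval hε])
  calc ∑ j ∈ Ineg ε, P.potentialAfter t j
      ≤ ∑ j ∈ Ineg ε, ((2 : ℝ) ^ j * P.p t j + (if j = -Bval ε then 2 * ε else 0) + c) :=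
        sum_le_sum fun j hj => ?_
    _ = _ := by
        rw [sum_add_distrib, sum_add_distrib, sum_ite_eq', if_pos hmem, sum_const, nsmul_eq_mul]
  rw [← potential_of_neg (mem_filter.mp hj).2]
  split_ifs with hjB
  · subst hjB
    linarith [potentialAfter_neg_Bval_le hε h1 ht]
  · have hlt : -Bval ε < j :=
      lt_of_le_of_ne (mem_Iset.mp (mem_filter.mp hj).1).1 (Ne.symm hjB)
    rw [add_zero]
    exact potentialAfter_le_of_neg_Bval_lt ht hj hlt

end MProcess

/-- equation (8) of the paper: for every `ε ∈ (0,1)`, every process on `I_ε`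
with initial total mass `1`, and every step `t ≥ 1`, `W_{t+1} ≤ (1 + 1/B_ε³) W_t + 2ε`. -/
theorem stmt1 :
    ∀ ε : ℝ, ε ∈ Set.Ioo (0 : ℝ) 1 →
      ∀ P : MProcess ε, (∑ i ∈ Iset ε, P.p 1 i) = 1 →
        ∀ t : ℕ, 1 ≤ t →
          Wfun ε P (t + 1) ≤ (1 + 1 / (Bval ε : ℝ) ^ 3) * Wfun ε P t + 2 * ε := by
  intro ε hε P hmass t ht
  set S := ∑ i ∈ Ipos ε, P.p t i
  have hS : S ≤ Wfun ε P t := P.sum_Ipos_p_le_Wfun t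
  have hB := three_le_Bval hε
  have hcard := card_Ineg_mul_le hB (sum_nonneg fun i _ => P.p_nonneg t i : 0 ≤ S)
  have hSW : S / Bval ε ^ 3 ≤ 1 / Bval ε ^ 3 * Wfun ε P t := by
    rw [one_div_mul_eq_div]
    gcongr
  calc Wfun ε P (t + 1)
      = ∑ j ∈ Ineg ε, P.potentialAfter t j + ∑ j ∈ Ipos ε, P.potentialAfter t j := by
        rw [P.Wfun_succ_eq_sum_potentialAfter ht, sum_Iset_eq_sum_Ineg_add_sum_Ipos]
    _ ≤ (∑ i ∈ Ineg ε, (2 : ℝ) ^ i * P.p t i + 2 * ε +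
          (Ineg ε).card * (3 / 2 * (S / Bval ε ^ 4))) + S :=
        add_le_add (MProcess.sum_potentialAfter_Ineg_le hε hmass ht)
          (sum_le_sum fun _ _ => MProcess.potentialAfter_le_p)
    _ ≤ (1 + 1 / (Bval ε : ℝ) ^ 3) * Wfun ε P t + 2 * ε := by
        rw [Wfun] at hSW ⊢; linarith
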